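/- Let X, Y be real random variables on a probability space (Ω, ℱ, P) with E[|Y|] < ∞, and let α ∈ (0,1). Set p_α = (P[−X ≤ q_α(−X)] − α)/P[−X = q_α(−X)] if P[−X = q_α(−X)] > 0, and p_α = 0 otherwise. Suppose J is a {0,1}-valued random variable with P[J = 1] = p_α that is independent of the pair (X,Y), and define I = 1 on the event {−X > q_α(−X)} ∪ ({−X = q_α(−X)} ∩ {J = 1}) and I = 0 otherwise. Let g : ℝ → ℝ be any Borel measurable function such that g∘X is a version of the conditional expectation of Y given the σ-algebra generated by X. Then P[I = 1] = 1 − α and E[Y | I = 1] = (1−α)^{−1} ∫_α^1 g(−VaR_u(X)) du, the integral being the Lebesgue integral over u ∈ (α,1). -/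

import Mathlib

open MeasureTheory Set

/-- The `α`-quantile of a real random variable `X`:
`q_α(X) = inf {x ∈ ℝ : P[X ≤ x] ≥ α}`. -/
noncomputable def quantile {Ω : Type*} [MeasurableSpace Ω] (μ : Measure Ω)
    (X : Ω → ℝ) (α : ℝ) : ℝ :=
  sInf {x : ℝ | ENNReal.ofReal α ≤ μ {ω | X ω ≤ x}}

/-- Value-at-risk at level `α`: `VaR_α(X) = q_α(-X)`. -/
noncomputable def VaR {Ω : Type*} [MeasurableSpace Ω] (μ : Measure Ω)
    (X : Ω → ℝ) (α : ℝ) : ℝ :=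
  quantile μ (fun ω => - X ω) α

/-!
Under the uniform distribution on `(0, 1)` the quantile function of `-X` has the law of `-X`.
For `u ∈ (α, 1)` the quantile `q_u(-X)` equals `q = q_α(-X)` as long as `u ≤ F := P[-X ≤ q]`
and exceeds `q` afterwards, so
`∫_α^1 g(-VaR_u(X)) du = (F - α) g(-q) + E[g(X); -X > q]`.
On the other side, independence of `J` gives
`E[Y; I = 1] = E[Y; -X > q] + p_α E[Y; -X = q]`; both events lie in `σ(X)`, so `Y` may be
replaced by `g(X)` there, and `p_α P[-X = q] = F - α` because `P[-X < q] ≤ α ≤ F`.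
The same identity gives `P[I = 1] = (1 - F) + (F - α)`.
-/

open Filter ProbabilityTheory Topology

namespace StieltjesFunction

variable (f : StieltjesFunction ℝ) {u y₀ : ℝ}

lemma bddBelow_setOf_le (hy₀ : f y₀ < u) : BddBelow {y | u ≤ f y} :=
  ⟨y₀, fun _ hy => le_of_not_gt fun hlt => (hy.trans (f.mono hlt.le)).not_gt hy₀⟩

lemma sInf_setOf_le_le_iff (hy₀ : f y₀ < u) (htop : ∃ y, u ≤ f y) {x : ℝ} :
    sInf {y | u ≤ f y} ≤ x ↔ u ≤ f x := by
  refine ⟨fun hx => ?_, fun hx => csInf_le (f.bddBelow_setOf_le hy₀) hx⟩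
  set m := sInf {y | u ≤ f y}
  have hlim : Tendsto f (𝓝[>] m) (𝓝 (f m)) :=
    (f.right_continuous m).mono Ioi_subset_Ici_self
  have hev : ∀ᶠ y in 𝓝[>] m, u ≤ f y := by
    filter_upwards [self_mem_nhdsWithin] with y hy
    obtain ⟨s, hs, hsy⟩ := exists_lt_of_csInf_lt htop hy
    exact le_trans hs (f.mono hsy.le)
  exact (ge_of_tendsto hlim hev).trans (f.mono hx)

lemma leftLim_sInf_setOf_le_le (hy₀ : f y₀ < u) :
    Function.leftLim f (sInf {y | u ≤ f y}) ≤ u := by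
  refine le_of_tendsto (f.mono.tendsto_leftLim _) ?_
  filter_upwards [self_mem_nhdsWithin] with y hy
  exact le_of_not_ge fun h => (csInf_le (f.bddBelow_setOf_le hy₀) h).not_gt hy

end StieltjesFunction

section Quantile

variable {Ω : Type*} [MeasurableSpace Ω] {μ : Measure Ω} [IsProbabilityMeasure μ]
  {Z : Ω → ℝ} {u x α : ℝ}

lemma cdf_map_eq_measureReal (hZ : Measurable Z) (x : ℝ) :
    cdf (μ.map Z) x = μ.real {ω | Z ω ≤ x} := by
  have := Measure.isProbabilityMeasure_map (μ := μ) hZ.aemeasurable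
  rw [cdf_eq_real, map_measureReal_apply hZ measurableSet_Iic]
  rfl

lemma quantile_eq_sInf_cdf (hZ : Measurable Z) (u : ℝ) :
    quantile μ Z u = sInf {x | u ≤ cdf (μ.map Z) x} := by
  have := Measure.isProbabilityMeasure_map (μ := μ) hZ.aemeasurable
  unfold quantile
  congr 1
  ext x
  change ENNReal.ofReal u ≤ _ ↔ u ≤ _
  rw [← ENNReal.ofReal_le_ofReal_iff (cdf_nonneg _ _), ofReal_cdf,
    Measure.map_apply hZ measurableSet_Iic]
  rfl

lemma exists_cdf_lt (μ : Measure ℝ) (hu : 0 < u) : ∃ y, cdf μ y < u :=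
  ((tendsto_cdf_atBot μ).eventually (gt_mem_nhds hu)).exists

lemma exists_le_cdf (μ : Measure ℝ) (hu : u < 1) : ∃ y, u ≤ cdf μ y :=
  ((tendsto_cdf_atTop μ).eventually (le_mem_nhds hu)).exists

lemma quantile_le_iff (hZ : Measurable Z) (hu : u ∈ Ioo 0 1) :
    quantile μ Z u ≤ x ↔ u ≤ μ.real {ω | Z ω ≤ x} := by
  obtain ⟨y₀, hy₀⟩ := exists_cdf_lt (μ.map Z) hu.1
  rw [quantile_eq_sInf_cdf hZ, ← cdf_map_eq_measureReal hZ]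
  exact (cdf _).sInf_setOf_le_le_iff hy₀ (exists_le_cdf _ hu.2)

lemma le_measureReal_le_quantile (hZ : Measurable Z) (hu : u ∈ Ioo 0 1) :
    u ≤ μ.real {ω | Z ω ≤ quantile μ Z u} :=
  (quantile_le_iff hZ hu).1 le_rfl

lemma measureReal_le_quantile_sub_le (hZ : Measurable Z) (hu : 0 < u) :
    μ.real {ω | Z ω ≤ quantile μ Z u} - u ≤ μ.real {ω | Z ω = quantile μ Z u} := by
  have := Measure.isProbabilityMeasure_map (μ := μ) hZ.aemeasurable
  rw [← cdf_map_eq_measureReal hZ]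
  obtain ⟨y₀, hy₀⟩ := exists_cdf_lt (μ.map Z) hu
  have hleft := (cdf (μ.map Z)).leftLim_sInf_setOf_le_le hy₀
  rw [← quantile_eq_sInf_cdf hZ] at hleft
  have hsingleton : μ.real {ω | Z ω = quantile μ Z u}
      = cdf (μ.map Z) (quantile μ Z u) - Function.leftLim (cdf (μ.map Z)) (quantile μ Z u) := by
    rw [← ENNReal.toReal_ofReal (sub_nonneg.2 ((cdf _).mono.leftLim_le le_rfl)),
      ← StieltjesFunction.measure_singleton, measure_cdf,
      Measure.map_apply hZ (measurableSet_singleton _)]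
    rfl
  linarith

lemma monotoneOn_quantile (hZ : Measurable Z) : MonotoneOn (quantile μ Z) (Ioo 0 1) :=
  fun _ hu _ hv huv => (quantile_le_iff hZ hu).2 (huv.trans (le_measureReal_le_quantile hZ hv))

lemma aemeasurable_quantile (hZ : Measurable Z) :
    AEMeasurable (quantile μ Z) (volume.restrict (Ioo 0 1)) :=
  aemeasurable_restrict_of_monotoneOn measurableSet_Ioo (monotoneOn_quantile hZ)

lemma volume_Iic_inter_Ioo_zero_one {c : ℝ} (hc : c ≤ 1) :
    volume (Iic c ∩ Ioo 0 1) = ENNReal.ofReal c := by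
  refine le_antisymm ?_ ?_
  · calc volume (Iic c ∩ Ioo 0 1) ≤ volume (Icc 0 c) :=
          measure_mono fun v hv => ⟨hv.2.1.le, hv.1⟩
      _ = ENNReal.ofReal c := by rw [Real.volume_Icc, sub_zero]
  · calc ENNReal.ofReal c = volume (Ioo 0 c) := by rw [Real.volume_Ioo, sub_zero]
      _ ≤ volume (Iic c ∩ Ioo 0 1) :=
          measure_mono fun v hv => ⟨hv.2.le, hv.1, hv.2.trans_le hc⟩

lemma map_quantile (hZ : Measurable Z) :
    (volume.restrict (Ioo (0 : ℝ) 1)).map (quantile μ Z) = μ.map Z := by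
  have := Measure.isProbabilityMeasure_map (μ := μ) hZ.aemeasurable
  have : IsProbabilityMeasure (volume.restrict (Ioo (0 : ℝ) 1)) := ⟨by simp⟩
  have := Measure.isProbabilityMeasure_map (aemeasurable_quantile (μ := μ) hZ)
  refine Measure.ext_of_Iic _ _ fun x => ?_
  have hpre : quantile μ Z ⁻¹' Iic x ∩ Ioo 0 1 = Iic (μ.real {ω | Z ω ≤ x}) ∩ Ioo 0 1 := by
    ext v
    exact and_congr_left fun hv => quantile_le_iff hZ hv
  rw [Measure.map_apply_of_aemeasurable (aemeasurable_quantile hZ) measurableSet_Iic,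
    Measure.restrict_apply' measurableSet_Ioo, hpre,
    volume_Iic_inter_Ioo_zero_one measureReal_le_one, ofReal_measureReal,
    Measure.map_apply hZ measurableSet_Iic]
  rfl

lemma integral_comp_quantile (hZ : Measurable Z) {φ : ℝ → ℝ} (hφ : Measurable φ) :
    ∫ u in Ioo 0 1, φ (quantile μ Z u) = ∫ ω, φ (Z ω) ∂μ := by
  rw [← integral_map (aemeasurable_quantile hZ) hφ.aestronglyMeasurable, map_quantile hZ,
    integral_map hZ.aemeasurable hφ.aestronglyMeasurable]

lemma integrableOn_comp_quantile_iff (hZ : Measurable Z) {φ : ℝ → ℝ} (hφ : Measurable φ) :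
    IntegrableOn (fun u => φ (quantile μ Z u)) (Ioo 0 1) ↔ Integrable (fun ω => φ (Z ω)) μ := by
  have hmap := integrable_map_measure hφ.aestronglyMeasurable (aemeasurable_quantile (μ := μ) hZ)
  rw [map_quantile hZ] at hmap
  exact hmap.symm.trans (integrable_map_measure hφ.aestronglyMeasurable hZ.aemeasurable)

lemma indicator_Ioo_comp_quantile (hZ : Measurable Z) (hα : α ∈ Ioo 0 1) (h : ℝ → ℝ)
    {u : ℝ} (hu : u ∈ Ioo 0 1) :
    (Ioo α 1).indicator (fun v => h (quantile μ Z v)) u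
      = (Ioc α (μ.real {ω | Z ω ≤ quantile μ Z α})).indicator (fun _ => h (quantile μ Z α)) u
        + (Ioi (quantile μ Z α)).indicator h (quantile μ Z u) := by
  rcases le_or_gt u α with huα | hαu
  · have hle : quantile μ Z u ≤ quantile μ Z α := monotoneOn_quantile hZ hu hα huα
    rw [indicator_of_notMem (fun h => huα.not_gt h.1), indicator_of_notMem (fun h => huα.not_gt h.1),
      indicator_of_notMem (notMem_Ioi.2 hle), add_zero]
  rcases le_or_gt u (μ.real {ω | Z ω ≤ quantile μ Z α}) with huF | hFu
  · have heq : quantile μ Z u = quantile μ Z α :=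
      le_antisymm ((quantile_le_iff hZ hu).2 huF) (monotoneOn_quantile hZ hα hu hαu.le)
    rw [indicator_of_mem (mem_Ioo.2 ⟨hαu, hu.2⟩), indicator_of_mem (mem_Ioc.2 ⟨hαu, huF⟩), heq,
      indicator_of_notMem (notMem_Ioi.2 le_rfl), add_zero]
  · have hlt : quantile μ Z α < quantile μ Z u :=
      lt_of_not_ge fun h => hFu.not_ge ((quantile_le_iff hZ hu).1 h)
    rw [indicator_of_mem (mem_Ioo.2 ⟨hαu, hu.2⟩), indicator_of_notMem (fun h => hFu.not_ge h.2),
      indicator_of_mem (mem_Ioi.2 hlt), zero_add]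

lemma setIntegral_Ioo_comp_quantile (hZ : Measurable Z) (hα : α ∈ Ioo 0 1) {h : ℝ → ℝ}
    (hh : Measurable h) (hint : Integrable (fun ω => h (Z ω)) μ) :
    ∫ u in Ioo α 1, h (quantile μ Z u)
      = (μ.real {ω | Z ω ≤ quantile μ Z α} - α) * h (quantile μ Z α)
        + ∫ ω in {ω | quantile μ Z α < Z ω}, h (Z ω) ∂μ := by
  set q := quantile μ Z α
  set F := μ.real {ω | Z ω ≤ q}
  have hαF : α ≤ F := le_measureReal_le_quantile hZ hα
  have hhq : Measurable ((Ioi q).indicator h) := hh.indicator measurableSet_Ioi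
  have hconst : ∫ u in Ioo 0 1, (Ioc α F).indicator (fun _ => h q) u = (F - α) * h q := by
    rw [Measure.restrict_congr_set Ioo_ae_eq_Ioc, integral_indicator_const _ measurableSet_Ioc,
      measureReal_restrict_apply measurableSet_Ioc,
      inter_eq_left.2 (Ioc_subset_Ioc hα.1.le measureReal_le_one),
      Real.volume_real_Ioc_of_le hαF, smul_eq_mul]
  have htail : ∫ u in Ioo 0 1, (Ioi q).indicator h (quantile μ Z u)
      = ∫ ω in {ω | q < Z ω}, h (Z ω) ∂μ := by
    rw [integral_comp_quantile hZ hhq,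
      ← integral_indicator (s := {ω | q < Z ω}) (hZ measurableSet_Ioi)]
    rfl
  calc ∫ u in Ioo α 1, h (quantile μ Z u)
      = ∫ u in Ioo 0 1, (Ioo α 1).indicator (fun v => h (quantile μ Z v)) u := by
        rw [setIntegral_indicator measurableSet_Ioo,
          inter_eq_right.2 (Ioo_subset_Ioo_left hα.1.le)]
    _ = ∫ u in Ioo 0 1, ((Ioc α F).indicator (fun _ => h q) u
          + (Ioi q).indicator h (quantile μ Z u)) :=
        setIntegral_congr_fun measurableSet_Ioo fun u hu =>
          indicator_Ioo_comp_quantile hZ hα h hu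
    _ = (F - α) * h q + ∫ ω in {ω | q < Z ω}, h (Z ω) ∂μ := by
        rw [integral_add ((integrable_const _).indicator measurableSet_Ioc)
          ((integrableOn_comp_quantile_iff hZ hhq).2 ?_), hconst, htail]
        exact hint.indicator (hZ measurableSet_Ioi)

end Quantile

lemma setIntegral_eq_of_ae_eq_condExp {Ω : Type*} {m m₀ : MeasurableSpace Ω} {μ : Measure Ω}
    (hm : m ≤ m₀) [SigmaFinite (μ.trim hm)] {Y V : Ω → ℝ} (hY : Integrable Y μ)
    (hV : V =ᵐ[μ] μ[Y | m]) {s : Set Ω} (hs : MeasurableSet[m] s) :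
    ∫ ω in s, Y ω ∂μ = ∫ ω in s, V ω ∂μ := by
  rw [← setIntegral_condExp hm hY hs]
  exact setIntegral_congr_ae (hm s hs) (hV.mono fun _ h _ => h.symm)

lemma ProbabilityTheory.IndepFun.setIntegral_preimage_inter {Ω β γ : Type*} [MeasurableSpace Ω]
    [MeasurableSpace β] [MeasurableSpace γ] {μ : Measure Ω} {J : Ω → β} {W : Ω → γ}
    (hind : IndepFun J W μ) (hJ : Measurable J) (hW : Measurable W) {t : Set β}
    (ht : MeasurableSet t) {s : Set γ} (hs : MeasurableSet s) {f : γ → ℝ} (hf : Measurable f) :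
    ∫ ω in J ⁻¹' t ∩ W ⁻¹' s, f (W ω) ∂μ = μ.real (J ⁻¹' t) * ∫ ω in W ⁻¹' s, f (W ω) ∂μ := by
  have hφ : Measurable (t.indicator fun _ => (1 : ℝ)) := measurable_const.indicator ht
  have hψ : Measurable (s.indicator f) := hf.indicator hs
  have hprod := (hind.comp hφ hψ).integral_fun_mul_eq_mul_integral
    (hφ.comp hJ).aestronglyMeasurable (hψ.comp hW).aestronglyMeasurable
  have hpt : ∀ ω, (J ⁻¹' t ∩ W ⁻¹' s).indicator (fun ω => f (W ω)) ω
      = t.indicator (fun _ => (1 : ℝ)) (J ω) * s.indicator f (W ω) := by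
    intro ω
    by_cases hJt : J ω ∈ t <;> by_cases hWs : W ω ∈ s <;> simp [hJt, hWs]
  rw [← integral_indicator ((hJ ht).inter (hW hs)), ← integral_indicator (hW hs),
    ← integral_indicator_one (hJ ht)]
  simp_rw [hpt]
  exact hprod

lemma mul_toReal_eq_of_eq_ite {x : ENNReal} {p b : ℝ}
    (hp : p = if x ≠ 0 then b / x.toReal else 0) (hx : x ≠ ⊤) (hb : x = 0 → b = 0) :
    p * x.toReal = b := by
  by_cases hx0 : x = 0
  · simp [hp, hx0, hb hx0]
  · rw [hp, if_pos hx0, div_mul_cancel₀ _ (ENNReal.toReal_pos hx0 hx).ne']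

/-- The probability `p_α` with which the randomization `J` adds the atom `{Z = q_α(Z)}` to the
tail `{Z > q_α(Z)}`, so that the resulting event has probability exactly `1 - α`. -/
noncomputable def randomizationProb {Ω : Type*} [MeasurableSpace Ω] (μ : Measure Ω)
    (Z : Ω → ℝ) (α : ℝ) : ℝ :=
  if μ {ω | Z ω = quantile μ Z α} ≠ 0 then
    ((μ {ω | Z ω ≤ quantile μ Z α}).toReal - α) / (μ {ω | Z ω = quantile μ Z α}).toReal
  else 0

section RandomizedTail

variable {Ω : Type*} [MeasurableSpace Ω] {μ : Measure Ω} {Z J Y : Ω → ℝ} {q α : ℝ}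

lemma randomizationProb_nonneg [IsProbabilityMeasure μ] (hZ : Measurable Z)
    (hα : α ∈ Ioo 0 1) : 0 ≤ randomizationProb μ Z α := by
  unfold randomizationProb
  split_ifs
  exacts [div_nonneg (sub_nonneg.2 (le_measureReal_le_quantile hZ hα)) ENNReal.toReal_nonneg,
    le_rfl]

lemma randomizationProb_mul_measureReal [IsProbabilityMeasure μ] (hZ : Measurable Z)
    (hα : α ∈ Ioo 0 1) :
    randomizationProb μ Z α * μ.real {ω | Z ω = quantile μ Z α}
      = μ.real {ω | Z ω ≤ quantile μ Z α} - α := by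
  refine mul_toReal_eq_of_eq_ite rfl (measure_ne_top _ _) fun h0 => le_antisymm ?_
    (sub_nonneg.2 (le_measureReal_le_quantile hZ hα))
  simpa [measureReal_def, h0] using measureReal_le_quantile_sub_le (μ := μ) hZ hα.1

lemma setIntegral_tail_union_randomized (hZ : Measurable Z) (hJ : Measurable J)
    (hY : Measurable Y) (hYint : Integrable Y μ) (hind : IndepFun J (fun ω => (Z ω, Y ω)) μ) :
    ∫ ω in {ω | q < Z ω} ∪ ({ω | Z ω = q} ∩ {ω | J ω = 1}), Y ω ∂μ
      = ∫ ω in {ω | q < Z ω}, Y ω ∂μ + μ.real {ω | J ω = 1} * ∫ ω in {ω | Z ω = q}, Y ω ∂μ := by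
  have hdisj : Disjoint {ω | q < Z ω} ({ω | Z ω = q} ∩ {ω | J ω = 1}) :=
    disjoint_left.2 fun ω h1 h2 => h1.ne' h2.1
  rw [setIntegral_union hdisj ((measurableSet_eq_fun hZ measurable_const).inter
      (measurableSet_eq_fun hJ measurable_const)) hYint.integrableOn hYint.integrableOn, inter_comm]
  congr 1
  exact hind.setIntegral_preimage_inter hJ (hZ.prodMk hY) (measurableSet_singleton 1)
    (measurableSet_eq_fun measurable_fst measurable_const) measurable_snd

lemma measureReal_tail_union_randomized [IsProbabilityMeasure μ] (hZ : Measurable Z)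
    (hJ : Measurable J) (hind : IndepFun J Z μ) (hα : α ∈ Ioo 0 1)
    (hJ1 : μ.real {ω | J ω = 1} = randomizationProb μ Z α) :
    μ.real ({ω | quantile μ Z α < Z ω} ∪
      ({ω | Z ω = quantile μ Z α} ∩ {ω | J ω = 1})) = 1 - α := by
  set q := quantile μ Z α
  have hdisj : Disjoint {ω | q < Z ω} ({ω | Z ω = q} ∩ {ω | J ω = 1}) :=
    disjoint_left.2 fun ω h1 h2 => h1.ne' h2.1
  have hmul : μ.real ({ω | J ω = 1} ∩ {ω | Z ω = q})
      = μ.real {ω | J ω = 1} * μ.real {ω | Z ω = q} := by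
    simp only [measureReal_def, ← ENNReal.toReal_mul]
    exact congrArg _ (hind.measure_inter_preimage_eq_mul {1} {q} (measurableSet_singleton 1)
      (measurableSet_singleton q))
  have htail : μ.real {ω | q < Z ω} = 1 - μ.real {ω | Z ω ≤ q} := by
    rw [← probReal_compl_eq_one_sub (measurableSet_le hZ measurable_const), compl_ofPred]
    simp only [not_le]
  rw [measureReal_union hdisj ((measurableSet_eq_fun hZ measurable_const).inter
      (measurableSet_eq_fun hJ measurable_const)), inter_comm, hmul, hJ1,
    randomizationProb_mul_measureReal hZ hα, htail]
  ring

end RandomizedTail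

theorem conditional_expectation_given_worst_case_general {Ω : Type*} [MeasurableSpace Ω]
    (μ : Measure Ω) [IsProbabilityMeasure μ]
    (X Y : Ω → ℝ) (hX : Measurable X) (hY : Measurable Y) (hYint : Integrable Y μ)
    (α : ℝ) (hα : α ∈ Set.Ioo (0 : ℝ) 1)
    (q : ℝ) (hq : q = quantile μ (fun ω => - X ω) α)
    (pα : ℝ)
    (hpα : pα = if μ {ω | - X ω = q} ≠ 0
      then ((μ {ω | - X ω ≤ q}).toReal - α) / (μ {ω | - X ω = q}).toReal else 0)
    (J : Ω → ℝ) (hJ : Measurable J)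
    (hJ1 : μ {ω | J ω = 1} = ENNReal.ofReal pα)
    (hind : ProbabilityTheory.IndepFun J (fun ω => (X ω, Y ω)) μ)
    (g : ℝ → ℝ) (hg : Measurable g)
    (hver : (fun ω => g (X ω)) =ᵐ[μ] μ[Y | MeasurableSpace.comap X Real.measurableSpace]) :
    μ ({ω | q < - X ω} ∪ ({ω | - X ω = q} ∩ {ω | J ω = 1})) = ENNReal.ofReal (1 - α) ∧
      (∫ ω in {ω | q < - X ω} ∪ ({ω | - X ω = q} ∩ {ω | J ω = 1}), Y ω ∂μ)
          / (μ ({ω | q < - X ω} ∪ ({ω | - X ω = q} ∩ {ω | J ω = 1}))).toReal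
        = (1 - α)⁻¹ * ∫ u in Set.Ioo α 1, g (- VaR μ X u) := by
  have hZ : Measurable fun ω => -X ω := hX.neg
  have hindZ : IndepFun J (fun ω => (-X ω, Y ω)) μ :=
    hind.comp measurable_id (measurable_fst.neg.prodMk measurable_snd)
  have hp : pα = randomizationProb μ (fun ω => -X ω) α := by rw [hpα, hq, randomizationProb]
  have hJ1real : μ.real {ω | J ω = 1} = pα := by
    rw [measureReal_def, hJ1, ENNReal.toReal_ofReal (hp ▸ randomizationProb_nonneg hZ hα)]
  have hE := measureReal_tail_union_randomized hZ hJ (hindZ.comp measurable_id measurable_fst) hα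
    (hJ1real.trans hp)
  have hpmul := randomizationProb_mul_measureReal (μ := μ) hZ hα
  have hRHS := setIntegral_Ioo_comp_quantile hZ hα (h := fun z => g (-z)) (hg.comp measurable_neg)
    (by simpa only [neg_neg] using integrable_condExp.congr hver.symm)
  simp only [← hq, ← hp, neg_neg] at hE hpmul hRHS
  have hcond := fun s (hs : MeasurableSet[MeasurableSpace.comap X Real.measurableSpace] s) =>
    setIntegral_eq_of_ae_eq_condExp hX.comap_le hYint hver hs
  have hatom : ∫ ω in {ω | -X ω = q}, g (X ω) ∂μ = μ.real {ω | -X ω = q} * g (-q) := by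
    rw [setIntegral_congr_fun (measurableSet_eq_fun hZ measurable_const) (g := fun _ => g (-q))
      fun ω hω => congrArg g (by linarith [show -X ω = q from hω]), setIntegral_const, smul_eq_mul]
  refine ⟨(ENNReal.ofReal_toReal (measure_ne_top μ _)).symm.trans (congrArg _ hE), ?_⟩
  rw [← measureReal_def, hE, setIntegral_tail_union_randomized hZ hJ hY hYint hindZ,
    hcond {ω | q < -X ω} ⟨{x | q < -x}, measurableSet_lt measurable_const measurable_neg, rfl⟩,
    hcond {ω | -X ω = q} ⟨{x | -x = q}, measurableSet_eq_fun measurable_neg measurable_const, rfl⟩,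
    hatom, hJ1real, ← mul_assoc, hpmul]
  simp only [VaR]
  rw [hRHS]
  ring

/-- Worst-case interpretation of the tail average: with `I = 1` on
`{-X > q_α(-X)} ∪ ({-X = q_α(-X)} ∩ {J = 1})` for a randomization `J` independent of
`(X,Y)` with `P[J = 1] = p_α`, one has `P[I = 1] = 1 - α` and
`E[Y | I = 1] = (1-α)⁻¹ ∫_α^1 E[Y | X = -VaR_u(X)] du`. -/
theorem conditional_expectation_given_worst_case {Ω : Type*} [MeasurableSpace Ω]
    (μ : Measure Ω) [IsProbabilityMeasure μ]
    (X Y : Ω → ℝ) (hX : Measurable X) (hY : Measurable Y) (hYint : Integrable Y μ)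
    (α : ℝ) (hα : α ∈ Set.Ioo (0 : ℝ) 1)
    (q : ℝ) (hq : q = quantile μ (fun ω => - X ω) α)
    (pα : ℝ)
    (hpα : pα = if μ {ω | - X ω = q} ≠ 0
      then ((μ {ω | - X ω ≤ q}).toReal - α) / (μ {ω | - X ω = q}).toReal else 0)
    (J : Ω → ℝ) (hJ : Measurable J) (hJ01 : ∀ ω, J ω = 0 ∨ J ω = 1)
    (hJ1 : μ {ω | J ω = 1} = ENNReal.ofReal pα)
    (hind : ProbabilityTheory.IndepFun J (fun ω => (X ω, Y ω)) μ)
    (g : ℝ → ℝ) (hg : Measurable g)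
    (hver : (fun ω => g (X ω)) =ᵐ[μ] μ[Y | MeasurableSpace.comap X Real.measurableSpace]) :
    μ ({ω | q < - X ω} ∪ ({ω | - X ω = q} ∩ {ω | J ω = 1})) = ENNReal.ofReal (1 - α) ∧
      (∫ ω in {ω | q < - X ω} ∪ ({ω | - X ω = q} ∩ {ω | J ω = 1}), Y ω ∂μ)
          / (μ ({ω | q < - X ω} ∪ ({ω | - X ω = q} ∩ {ω | J ω = 1}))).toReal
        = (1 - α)⁻¹ * ∫ u in Set.Ioo α 1, g (- VaR μ X u) :=
  conditional_expectation_given_worst_case_general μ X Y hX hY hYint α hα q hq pα hpα J hJ hJ1 hind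
    g hg hver
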